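/- arXiv:1609.05127 — 2 statements merged into one kernel-verified Lean document; each statement's English description precedes it below -/
import Mathlib

section
/- One-row special case (Andrews–Simay, largest parts): For all positive integers n, k, m, \(g_{m}(n,k)=\sum_{j\ge 0}(-1)^{j+m-1}\binom{j}{m-1}\,\bar g_{j,k}(n)\), where the sum is finite since \(\bar g_{j,k}(n)=0\) for j > n. -/
/-- An overpartition of `n`: a partition of `n` together with a set of distinct part values
that are overlined (overlining the last occurrence of each such value). -/
structure Overpartition (n : ℕ) where
  /-- The underlying partition of `n`. -/
  partition : Nat.Partition n
  /-- The set of overlined values. -/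
  overlined : Finset ℕ
  /-- Every overlined value occurs as a part. -/
  overlined_mem : ∀ a ∈ overlined, a ∈ partition.parts

/-- `g m n k` is the number of partitions of `n` in which `k` occurs as a part and exactly
`m - 1` distinct integers larger than `k` occur as parts (i.e. `k` is the `m`-th largest
part). -/
noncomputable def g (m n k : ℕ) : ℕ :=
  Nat.card {p : Nat.Partition n // k ∈ p.parts ∧
    (p.parts.toFinset.filter fun a => k < a).card = m - 1}

/-- `gbar j k n` is the number of overpartitions of `n` in which the value `k` is overlined,
no value smaller than `k` is overlined, and exactly `j` distinct values larger than `k` are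
overlined. -/
noncomputable def gbar (j k n : ℕ) : ℕ :=
  Nat.card {O : Overpartition n // k ∈ O.overlined ∧
    (∀ a ∈ O.overlined, ¬ a < k) ∧
    (O.overlined.filter fun a => k < a).card = j}

open Finset

lemma keyIdentity (N d r : ℕ) (hd : d ≤ N) :
    ∑ j ∈ range (N + 1), (-1 : ℤ) ^ (j + r) * (j.choose r : ℤ) * (d.choose j : ℤ)
      = if d = r then 1 else 0 := by
  rcases lt_or_ge d r with h | h
  · rw [if_neg (by omega)]
    apply Finset.sum_eq_zero
    intro j hj
    rcases lt_or_ge j r with hj1 | hj1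
    · simp [Nat.choose_eq_zero_of_lt hj1]
    · simp [Nat.choose_eq_zero_of_lt (lt_of_lt_of_le h hj1)]
  · have hsub : Finset.Ico r (d + 1) ⊆ range (N + 1) := by
      rw [Finset.range_eq_Ico]
      exact Finset.Ico_subset_Ico (Nat.zero_le _) (by omega)
    rw [← Finset.sum_subset hsub (by
      intro j hj hj2
      simp only [Finset.mem_Ico, Finset.mem_range, not_and, not_lt] at hj hj2
      rcases lt_or_ge j r with hj1 | hj1
      · simp [Nat.choose_eq_zero_of_lt hj1]
      · have : d < j := by omega
        simp [Nat.choose_eq_zero_of_lt this])]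
    rw [Finset.sum_Ico_eq_sum_range]
    have hdr : d + 1 - r = (d - r) + 1 := by omega
    rw [hdr]
    have key : ∀ i ∈ range (d - r + 1),
        (-1 : ℤ) ^ (r + i + r) * ((r + i).choose r : ℤ) * (d.choose (r + i) : ℤ)
          = (d.choose r : ℤ) * ((-1 : ℤ) ^ i * ((d - r).choose i : ℤ)) := by
      intro i hi
      simp only [Finset.mem_range] at hi
      have hle : r + i ≤ d := by omega
      have hcm := Nat.choose_mul (n := d) (k := r + i) (s := r) (Nat.le_add_right r i)
      have hri : r + i - r = i := by omega
      rw [hri] at hcm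
      have hpow : (-1 : ℤ) ^ (r + i + r) = (-1 : ℤ) ^ i := by
        have : r + i + r = 2 * r + i := by ring
        rw [this, pow_add, pow_mul, neg_one_sq, one_pow, one_mul]
      rw [hpow]
      have : ((r + i).choose r : ℤ) * (d.choose (r + i) : ℤ)
          = (d.choose r : ℤ) * ((d - r).choose i : ℤ) := by
        rw [mul_comm]; exact_mod_cast congrArg (Nat.cast : ℕ → ℤ) hcm
      rw [mul_assoc, this]; ring
    rw [Finset.sum_congr rfl key, ← Finset.mul_sum, Int.alternating_sum_range_choose]
    rcases eq_or_ne d r with rfl | hne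
    · simp
    · rw [if_neg (by omega), if_neg hne, mul_zero]

lemma Overpartition.ext' {n : ℕ} {O₁ O₂ : Overpartition n}
    (h1 : O₁.partition = O₂.partition) (h2 : O₁.overlined = O₂.overlined) : O₁ = O₂ := by
  cases O₁; cases O₂; simp_all

/-- distinct part values bigger than `k` -/
def bigs (n k : ℕ) (p : Nat.Partition n) : Finset ℕ :=
  p.parts.toFinset.filter fun a => k < a

def gbarEquiv (j k n : ℕ) :
    {O : Overpartition n // k ∈ O.overlined ∧ (∀ a ∈ O.overlined, ¬ a < k) ∧
      (O.overlined.filter fun a => k < a).card = j}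
    ≃ Σ p : {p : Nat.Partition n // k ∈ p.parts},
        {S // S ∈ (bigs n k p.1).powersetCard j} where
  toFun O := ⟨⟨O.1.partition, O.1.overlined_mem k O.2.1⟩,
    ⟨O.1.overlined.filter fun a => k < a, by
      rw [Finset.mem_powersetCard]
      refine ⟨fun a ha => ?_, O.2.2.2⟩
      simp only [Finset.mem_filter] at ha
      simp only [bigs, Finset.mem_filter, Multiset.mem_toFinset]
      exact ⟨O.1.overlined_mem a ha.1, ha.2⟩⟩⟩
  invFun x := ⟨⟨x.1.1, insert k x.2.1, by
      intro a ha
      rcases Finset.mem_insert.1 ha with rfl | ha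
      · exact x.1.2
      · have := (Finset.mem_powersetCard.1 x.2.2).1 ha
        simp only [bigs, Finset.mem_filter, Multiset.mem_toFinset] at this
        exact this.1⟩, by
    refine ⟨Finset.mem_insert_self _ _, ?_, ?_⟩
    · intro a ha
      rcases Finset.mem_insert.1 ha with rfl | ha
      · omega
      · have := (Finset.mem_powersetCard.1 x.2.2).1 ha
        simp only [bigs, Finset.mem_filter] at this
        omega
    · have hfi : (insert k x.2.1).filter (fun a => k < a) = x.2.1 := by
        rw [Finset.filter_insert, if_neg (lt_irrefl k), Finset.filter_eq_self.2]
        intro a ha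
        have := (Finset.mem_powersetCard.1 x.2.2).1 ha
        simp only [bigs, Finset.mem_filter] at this
        exact this.2
      rw [hfi]
      exact (Finset.mem_powersetCard.1 x.2.2).2⟩
  left_inv O := by
    apply Subtype.ext
    show Overpartition.mk _ _ _ = _
    apply Overpartition.ext'
    · rfl
    ext a
    simp only [Finset.mem_insert, Finset.mem_filter]
    constructor
    · rintro (rfl | h)
      · exact O.2.1
      · exact h.1
    · intro ha
      have := O.2.2.1 a ha
      rcases lt_trichotomy a k with h | rfl | h
      · omega
      · exact Or.inl rfl
      · exact Or.inr ⟨ha, h⟩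
  right_inv x := by
    rcases x with ⟨⟨p, hp⟩, ⟨S, hS⟩⟩
    have hfi : (insert k S).filter (fun a => k < a) = S := by
      rw [Finset.filter_insert, if_neg (lt_irrefl k), Finset.filter_eq_self.2]
      intro a ha
      have := (Finset.mem_powersetCard.1 hS).1 ha
      simp only [bigs, Finset.mem_filter] at this
      exact this.2
    show (⟨⟨p, _⟩, ⟨(insert k S).filter (fun a => k < a), _⟩⟩ :
      Σ p : {p : Nat.Partition n // k ∈ p.parts}, {S // S ∈ (bigs n k p.1).powersetCard j}) = _
    congr 1
    exact Subtype.ext hfi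

lemma gbar_eq (j k n : ℕ) :
    gbar j k n = ∑ p : {p : Nat.Partition n // k ∈ p.parts},
      (bigs n k p.1).card.choose j := by
  rw [gbar, Nat.card_congr (gbarEquiv j k n), Nat.card_eq_fintype_card, Fintype.card_sigma]
  refine Finset.sum_congr rfl fun p _ => ?_
  rw [Fintype.card_coe, Finset.card_powersetCard]

lemma g_eq (m n k : ℕ) :
    g m n k = ∑ p : {p : Nat.Partition n // k ∈ p.parts},
      if (bigs n k p.1).card = m - 1 then 1 else 0 := by
  have e : {p : Nat.Partition n // k ∈ p.parts ∧
      (p.parts.toFinset.filter fun a => k < a).card = m - 1}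
      ≃ {q : {p : Nat.Partition n // k ∈ p.parts} // (bigs n k q.1).card = m - 1} :=
    (Equiv.subtypeSubtypeEquivSubtypeInter _ _).symm
  rw [g, Nat.card_congr e, Nat.card_eq_fintype_card, Fintype.card_subtype,
    Finset.card_filter]

lemma bigs_card_le (n k : ℕ) (p : Nat.Partition n) : (bigs n k p).card ≤ n := by
  calc (bigs n k p).card ≤ p.parts.toFinset.card := Finset.card_filter_le _ _
    _ ≤ Multiset.card p.parts := Multiset.toFinset_card_le _
    _ ≤ p.parts.sum := by
        have := Multiset.card_nsmul_le_sum (s := p.parts) (a := 1)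
          (fun x hx => p.parts_pos hx)
        simpa using this
    _ = n := p.parts_sum

/-- **Andrews–Simay (largest parts).** For all positive integers `n`, `k`, `m`,
`g m (n, k) = ∑_{j ≥ 0} (-1)^(j+m-1) C(j, m-1) ḡ_{j,k}(n)`; the sum is finite since
`gbar j k n = 0` for `j > n`. -/
theorem g_eq_alternating_sum_gbar (n k m : ℕ) (hn : 0 < n) (hk : 0 < k) (hm : 0 < m) :
    (g m n k : ℤ) =
      ∑ j ∈ Finset.range (n + 1),
        (-1 : ℤ) ^ (j + (m - 1)) * (j.choose (m - 1) : ℤ) * (gbar j k n : ℤ) := by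
  rw [g_eq]
  push_cast
  have step : ∀ p : {p : Nat.Partition n // k ∈ p.parts},
      (if (bigs n k p.1).card = m - 1 then (1 : ℤ) else 0)
        = ∑ j ∈ range (n + 1), (-1 : ℤ) ^ (j + (m - 1)) * (j.choose (m - 1) : ℤ) *
            ((bigs n k p.1).card.choose j : ℤ) :=
    fun p => (keyIdentity n _ (m - 1) (bigs_card_le n k p.1)).symm
  rw [Finset.sum_congr rfl (fun p _ => step p), Finset.sum_comm]
  refine Finset.sum_congr rfl fun j _ => ?_
  rw [gbar_eq j k n]
  push_cast
  rw [Finset.mul_sum]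
end

section
/- One-row special case (Andrews–Simay, smallest parts): For all positive integers n, k, m, \(s_{m}(n,k)=\sum_{j\ge 0}(-1)^{j+m-1}\binom{j}{m-1}\,\bar s_{j,k}(n)\), where the sum is finite since \(\bar s_{j,k}(n)=0\) for j > n. -/
/-- `s m n k` is the number of partitions of `n` in which `k` occurs as a part and exactly
`m - 1` distinct positive integers smaller than `k` occur as parts (i.e. `k` is the `m`-th
smallest part). -/
noncomputable def s (m n k : ℕ) : ℕ :=
  Nat.card {p : Nat.Partition n // k ∈ p.parts ∧
    (p.parts.toFinset.filter fun a => 0 < a ∧ a < k).card = m - 1}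

/-- `sbar j k n` is the number of overpartitions of `n` in which the value `k` is overlined,
no value larger than `k` is overlined, and exactly `j` distinct positive values smaller than
`k` are overlined. -/
noncomputable def sbar (j k n : ℕ) : ℕ :=
  Nat.card {O : Overpartition n // k ∈ O.overlined ∧
    (∀ a ∈ O.overlined, ¬ k < a) ∧
    (O.overlined.filter fun a => 0 < a ∧ a < k).card = j}

/-!
Sort the partitions `p` of `n` containing `k` by the number `c(p)` of distinct parts below `k`.
An overpartition counted by `s̄_{j,k}(n)` is such a `p` together with a `j`-subset of its small
values (`k` itself is overlined and nothing above it is), so `s̄_{j,k}(n) = ∑_p C(c(p), j)`.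
Binomial inversion, `∑_j (-1)^(j+r) C(j,r) C(d,j) = [d = r]`, then keeps exactly the
partitions with `c(p) = m - 1`.
-/

open Finset

theorem alternating_sum_range_choose_mul_choose (d r : ℕ) :
    ∑ j ∈ range (d + 1), (-1 : ℤ) ^ (j + r) * (j.choose r : ℤ) * (d.choose j : ℤ) =
      if d = r then 1 else 0 := by
  rcases lt_or_ge d r with hdr | hrd
  · rw [if_neg hdr.ne]
    refine sum_eq_zero fun j hj => ?_
    rw [Nat.choose_eq_zero_of_lt (by grind)]
    simp
  obtain ⟨e, rfl⟩ := Nat.exists_eq_add_of_le hrd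
  -- `C(r+e, r+i) C(r+i, r) = C(r+e, r) C(e, i)` turns the tail into an alternating row sum.
  have hterm (i : ℕ) : (-1 : ℤ) ^ (r + i + r) * ((r + i).choose r : ℤ) *
      ((r + e).choose (r + i) : ℤ) = (r + e).choose r * ((-1) ^ i * e.choose i) := by
    have h := Nat.choose_mul (n := r + e) (k := r + i) (s := r) (by omega)
    rw [Nat.add_sub_cancel_left, Nat.add_sub_cancel_left] at h
    replace h : ((r + e).choose (r + i) * (r + i).choose r : ℤ) =
        (r + e).choose r * e.choose i := by
      exact_mod_cast h
    rw [show r + i + r = i + 2 * r by ring, pow_add, pow_mul, neg_one_sq, one_pow, mul_one]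
    linear_combination (-1 : ℤ) ^ i * h
  have hlow :
      ∑ j ∈ range r, (-1 : ℤ) ^ (j + r) * (j.choose r : ℤ) * ((r + e).choose j : ℤ) = 0 :=
    sum_eq_zero fun j hj => by simp [Nat.choose_eq_zero_of_lt (mem_range.1 hj)]
  rw [add_assoc, sum_range_add, hlow, zero_add, sum_congr rfl fun i _ => hterm i, ← mul_sum,
    Int.alternating_sum_range_choose]
  split_ifs with he <;> simp_all

theorem sum_range_alternating_choose_mul_choose_of_le {d N : ℕ} (r : ℕ) (hd : d ≤ N) :
    ∑ j ∈ range (N + 1), (-1 : ℤ) ^ (j + r) * (j.choose r : ℤ) * (d.choose j : ℤ) =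
      if d = r then 1 else 0 := by
  rw [← alternating_sum_range_choose_mul_choose d r]
  refine (sum_subset (range_subset_range.2 (by omega)) fun j _ hjd => ?_).symm
  rw [Nat.choose_eq_zero_of_lt (n := d) (by simpa using hjd)]
  simp


section

variable {α : Type*} [DecidableEq α] {P : α → Prop} [DecidablePred P] {a : α} {s : Finset α}

theorem Finset.filter_insert_of_neg_of_forall (ha : ¬P a) (hs : ∀ x ∈ s, P x) :
    (insert a s).filter P = s := by
  rw [filter_insert, if_neg ha, filter_true_of_mem hs]

theorem Finset.insert_filter_eq_self (ha : a ∈ s) (hs : ∀ x ∈ s, x ≠ a → P x) :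
    insert a (s.filter P) = s := by
  ext x
  by_cases hx : x = a <;> aesop

end

namespace Nat.Partition

variable {n k : ℕ}

def smallParts (p : Nat.Partition n) (k : ℕ) : Finset ℕ :=
  p.parts.toFinset.filter fun a => 0 < a ∧ a < k

theorem mem_smallParts {p : Nat.Partition n} {a : ℕ} :
    a ∈ p.smallParts k ↔ a ∈ p.parts ∧ 0 < a ∧ a < k := by
  simp [smallParts]

theorem forall_pos_lt_of_mem_powersetCard_smallParts {j : ℕ} {p : Nat.Partition n}
    {T : Finset ℕ} (hT : T ∈ powersetCard j (p.smallParts k)) : ∀ a ∈ T, 0 < a ∧ a < k :=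
  fun _ ha => (mem_smallParts.1 ((mem_powersetCard.1 hT).1 ha)).2

theorem card_smallParts_le (p : Nat.Partition n) (k : ℕ) : #(p.smallParts k) ≤ n :=
  calc #(p.smallParts k) ≤ #p.parts.toFinset := card_filter_le _ _
    _ ≤ Multiset.card p.parts := Multiset.toFinset_card_le _
    _ ≤ p.parts.sum := by simpa using Multiset.card_nsmul_le_sum (fun _ hx => p.parts_pos hx)
    _ = n := p.parts_sum

end Nat.Partition

open Nat.Partition

theorem s_eq_sum_ite (m n k : ℕ) :
    s m n k = ∑ p : {p : Nat.Partition n // k ∈ p.parts},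
      if #(p.1.smallParts k) = m - 1 then 1 else 0 := by
  classical
  rw [s, ← Nat.card_congr (Equiv.subtypeSubtypeEquivSubtypeInter _ _), Nat.card_eq_fintype_card,
    Fintype.card_subtype, card_filter]
  rfl

def sbarEquivSigmaPowersetCard (j k n : ℕ) :
    {O : Overpartition n // k ∈ O.overlined ∧ (∀ a ∈ O.overlined, ¬ k < a) ∧
      #(O.overlined.filter fun a => 0 < a ∧ a < k) = j}
    ≃ Σ p : {p : Nat.Partition n // k ∈ p.parts}, powersetCard j (p.1.smallParts k) where
  toFun O := ⟨⟨O.1.partition, O.1.overlined_mem k O.2.1⟩,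
    ⟨O.1.overlined.filter _, mem_powersetCard.2
      ⟨fun a ha =>
        mem_smallParts.2 ⟨O.1.overlined_mem a (mem_filter.1 ha).1, (mem_filter.1 ha).2⟩,
        O.2.2.2⟩⟩⟩
  invFun x := ⟨⟨x.1.1, insert k x.2.1, by
      simp only [mem_insert, forall_eq_or_imp]
      exact ⟨x.1.2, fun a ha => (mem_smallParts.1 ((mem_powersetCard.1 x.2.2).1 ha)).1⟩⟩,
    mem_insert_self _ _,
    by
      simp only [mem_insert, forall_eq_or_imp, lt_irrefl, not_false_eq_true, true_and]
      exact fun a ha => (forall_pos_lt_of_mem_powersetCard_smallParts x.2.2 a ha).2.not_gt,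
    by
      rw [filter_insert_of_neg_of_forall (by simp)
        (forall_pos_lt_of_mem_powersetCard_smallParts x.2.2)]
      exact (mem_powersetCard.1 x.2.2).2⟩
  left_inv := by
    rintro ⟨⟨p, S, hS⟩, hk, hle, -⟩
    refine Subtype.ext ?_
    simp only [Overpartition.mk.injEq, true_and]
    exact insert_filter_eq_self hk fun a ha hak =>
      ⟨p.parts_pos (hS a ha), lt_of_le_of_ne (not_lt.1 (hle a ha)) hak⟩
  right_inv := by
    rintro ⟨p, T, hT⟩
    refine Sigma.ext rfl (heq_of_eq (Subtype.ext ?_))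
    exact filter_insert_of_neg_of_forall (by simp) (forall_pos_lt_of_mem_powersetCard_smallParts hT)

theorem sbar_eq_sum_choose (j k n : ℕ) :
    sbar j k n =
      ∑ p : {p : Nat.Partition n // k ∈ p.parts}, (#(p.1.smallParts k)).choose j := by
  classical
  rw [sbar, Nat.card_congr (sbarEquivSigmaPowersetCard j k n), Nat.card_eq_fintype_card,
    Fintype.card_sigma]
  simp_rw [Fintype.card_coe, card_powersetCard]

theorem s_eq_alternating_sum_sbar_general (n k m : ℕ) :
    (s m n k : ℤ) =
      ∑ j ∈ Finset.range (n + 1),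
        (-1 : ℤ) ^ (j + (m - 1)) * (j.choose (m - 1) : ℤ) * (sbar j k n : ℤ) := by
  calc (s m n k : ℤ)
      = ∑ p : {p : Nat.Partition n // k ∈ p.parts},
          if #(p.1.smallParts k) = m - 1 then 1 else 0 := by
        simp [s_eq_sum_ite]
    _ = ∑ p : {p : Nat.Partition n // k ∈ p.parts}, ∑ j ∈ range (n + 1),
          (-1 : ℤ) ^ (j + (m - 1)) * (j.choose (m - 1) : ℤ) *
            ((#(p.1.smallParts k)).choose j : ℤ) :=
        sum_congr rfl fun p _ =>
          (sum_range_alternating_choose_mul_choose_of_le _ (p.1.card_smallParts_le k)).symm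
    _ = _ := by
        rw [sum_comm]
        simp [sbar_eq_sum_choose, mul_sum]

/-- **Andrews–Simay (smallest parts).** For all positive integers `n`, `k`, `m`,
`s m (n, k) = ∑_{j ≥ 0} (-1)^(j+m-1) C(j, m-1) s̄_{j,k}(n)`; the sum is finite since
`sbar j k n = 0` for `j > n`. -/
theorem s_eq_alternating_sum_sbar (n k m : ℕ) (hn : 0 < n) (hk : 0 < k) (hm : 0 < m) :
    (s m n k : ℤ) =
      ∑ j ∈ Finset.range (n + 1),
        (-1 : ℤ) ^ (j + (m - 1)) * (j.choose (m - 1) : ℤ) * (sbar j k n : ℤ) :=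
  s_eq_alternating_sum_sbar_general n k m
end
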